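/- arXiv:2002.04964 — 4 statements merged into one kernel-verified Lean document; each statement's English description precedes it below -/
import Mathlib

section
/- Let η₁ > η₂ > 0 and a₁, a₂ ∈ ℝ with a₁ ≠ 0 and a₂ ≠ 0, and define on ℝ the functions v₁(x) = (a₁ e^{η₁x}/f(x)) · (1 + (a₂²/(4η₂²)) · ((η₁−η₂)/(η₁+η₂)) · e^{2η₂x}) and v₂(x) = (a₂ e^{η₂x}/f(x)) · (1 − (a₁²/(4η₁²)) · ((η₁−η₂)/(η₁+η₂)) · e^{2η₁x}), where f(x) = 1 + (a₁²/(4η₁²)) e^{2η₁x} + (a₂²/(4η₂²)) e^{2η₂x} + (a₁²a₂²/(16η₁²η₂²)) · ((η₁−η₂)²/(η₁+η₂)²) · e^{(2η₁+2η₂)x}. Then ∫_ℝ v₁(x)² dx = 2η₁ and ∫_ℝ v₂(x)² dx = 2η₂. -/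
/-!
Writing `A = a₁²/(4η₁²)`, `B = a₂²/(4η₂²)`, `K = A B ((η₁-η₂)/(η₁+η₂))²`, the square `v₁²` is the
derivative of `2η₁ (1 - (1 + B e^{2η₂x}) / f)`, as one checks by clearing denominators in
`e^{η₁x}` and `e^{η₂x}`. At `-∞` we have `f → 1`, so this primitive tends to `0`; at `+∞` the
term `K e^{(2η₁+2η₂)x}` dominates `f`, so it tends to `2η₁`. Swapping the two solitons
(`η₁ ↔ η₂`, `a₁ ↔ a₂`) leaves `f` unchanged and turns `v₁` into `v₂`.
-/

open MeasureTheory Real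

noncomputable section

/-- Denominator of the Manakov two-soliton solution. -/
def fML (η₁ η₂ a₁ a₂ x : ℝ) : ℝ :=
  1 + a₁ ^ 2 / (4 * η₁ ^ 2) * Real.exp (2 * η₁ * x)
    + a₂ ^ 2 / (4 * η₂ ^ 2) * Real.exp (2 * η₂ * x)
    + a₁ ^ 2 * a₂ ^ 2 / (16 * η₁ ^ 2 * η₂ ^ 2) * ((η₁ - η₂) ^ 2 / (η₁ + η₂) ^ 2)
        * Real.exp ((2 * η₁ + 2 * η₂) * x)

/-- First component of the explicit Manakov solution. -/
def v1ML (η₁ η₂ a₁ a₂ x : ℝ) : ℝ :=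
  a₁ * Real.exp (η₁ * x) / fML η₁ η₂ a₁ a₂ x *
    (1 + a₂ ^ 2 / (4 * η₂ ^ 2) * ((η₁ - η₂) / (η₁ + η₂)) * Real.exp (2 * η₂ * x))

/-- Second component of the explicit Manakov solution. -/
def v2ML (η₁ η₂ a₁ a₂ x : ℝ) : ℝ :=
  a₂ * Real.exp (η₂ * x) / fML η₁ η₂ a₁ a₂ x *
    (1 - a₁ ^ 2 / (4 * η₁ ^ 2) * ((η₁ - η₂) / (η₁ + η₂)) * Real.exp (2 * η₁ * x))

open Filter Topology

theorem integral_eq_sub_of_hasDerivAt_of_nonneg {F g : ℝ → ℝ} {m n : ℝ}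
    (hF : ∀ x, HasDerivAt F (g x) x) (hg : ∀ x, 0 ≤ g x)
    (hbot : Tendsto F atBot (𝓝 m)) (htop : Tendsto F atTop (𝓝 n)) :
    ∫ x, g x = n - m := by
  have hcont : Continuous F := continuous_iff_continuousAt.2 fun x => (hF x).continuousAt
  have hint (a b : ℝ) : IntervalIntegrable g volume a b :=
    intervalIntegral.intervalIntegrable_deriv_of_nonneg hcont.continuousOn (fun x _ => hF x)
      (fun x _ => hg x)
  have hFTC (a b : ℝ) : ∫ x in a..b, ‖g x‖ = F b - F a := by
    simp_rw [Real.norm_of_nonneg (hg _)]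
    exact intervalIntegral.integral_eq_sub_of_hasDerivAt (fun x _ => hF x) (hint a b)
  refine integral_of_hasDerivAt_of_tendsto hF ?_ hbot htop
  refine integrable_of_intervalIntegral_norm_tendsto (b := id) (n - m) (fun i => (hint (-i) i).1)
    tendsto_neg_atTop_atBot tendsto_id ?_
  simp_rw [hFTC]
  exact htop.sub (hbot.comp tendsto_neg_atTop_atBot)

theorem hasDerivAt_exp_const_mul (c x : ℝ) :
    HasDerivAt (fun y => exp (c * y)) (c * exp (c * x)) x := by
  simpa [mul_comm] using ((hasDerivAt_id x).const_mul c).exp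

theorem tendsto_exp_const_mul_atBot {c : ℝ} (hc : 0 < c) :
    Tendsto (fun x => exp (c * x)) atBot (𝓝 0) :=
  tendsto_exp_comp_nhds_zero.2 (tendsto_id.const_mul_atBot hc)

theorem tendsto_exp_neg_const_mul_atTop {c : ℝ} (hc : 0 < c) :
    Tendsto (fun x => exp (-c * x)) atTop (𝓝 0) :=
  tendsto_exp_comp_nhds_zero.2 (tendsto_id.const_mul_atTop_of_neg (neg_neg_of_pos hc))

theorem fML_pos (η₁ η₂ a₁ a₂ x : ℝ) : 0 < fML η₁ η₂ a₁ a₂ x := by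
  unfold fML; positivity

theorem fML_swap (η₁ η₂ a₁ a₂ : ℝ) : fML η₂ η₁ a₂ a₁ = fML η₁ η₂ a₁ a₂ := by
  ext x; unfold fML; ring_nf

theorem v2ML_eq_v1ML_swap (η₁ η₂ a₁ a₂ : ℝ) : v2ML η₁ η₂ a₁ a₂ = v1ML η₂ η₁ a₂ a₁ := by
  ext x; rw [v1ML, fML_swap, v2ML, add_comm η₂, ← neg_sub η₁, neg_div]; ring

def v1MLSqPrimitive (η₁ η₂ a₁ a₂ x : ℝ) : ℝ :=
  2 * η₁ * (1 - (1 + a₂ ^ 2 / (4 * η₂ ^ 2) * exp (2 * η₂ * x)) / fML η₁ η₂ a₁ a₂ x)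

theorem hasDerivAt_v1MLSqPrimitive {η₁ η₂ : ℝ} (h1 : 0 < η₁) (h2 : 0 < η₂) (a₁ a₂ x : ℝ) :
    HasDerivAt (v1MLSqPrimitive η₁ η₂ a₁ a₂) (v1ML η₁ η₂ a₁ a₂ x ^ 2) x := by
  have hf : HasDerivAt (fML η₁ η₂ a₁ a₂) _ x :=
    ((((hasDerivAt_exp_const_mul _ x).const_mul _).const_add 1).add
      ((hasDerivAt_exp_const_mul _ x).const_mul _)).add
      ((hasDerivAt_exp_const_mul (2 * η₁ + 2 * η₂) x).const_mul _)
  have hg := ((hasDerivAt_exp_const_mul (2 * η₂) x).const_mul (a₂ ^ 2 / (4 * η₂ ^ 2))).const_add 1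
  refine (((hg.div hf (fML_pos η₁ η₂ a₁ a₂ x).ne').const_sub 1).const_mul (2 * η₁)).congr_deriv ?_
  have hu : exp (2 * η₁ * x) = exp (η₁ * x) ^ 2 := by rw [← exp_nat_mul]; ring_nf
  have hw : exp (2 * η₂ * x) = exp (η₂ * x) ^ 2 := by rw [← exp_nat_mul]; ring_nf
  have huw : exp ((2 * η₁ + 2 * η₂) * x) = exp (η₁ * x) ^ 2 * exp (η₂ * x) ^ 2 := by
    rw [← hu, ← hw, ← exp_add]; ring_nf
  have hsum : η₁ + η₂ ≠ 0 := by positivity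
  have hf0 := (fML_pos η₁ η₂ a₁ a₂ x).ne'
  rw [fML, hu, hw, huw] at hf0
  rw [v1ML, fML, hu, hw, huw]
  field_simp
  ring

theorem tendsto_fML_atBot {η₁ η₂ : ℝ} (h1 : 0 < η₁) (h2 : 0 < η₂) (a₁ a₂ : ℝ) :
    Tendsto (fML η₁ η₂ a₁ a₂) atBot (𝓝 1) := by
  have hexp {c : ℝ} (hc : 0 < c) (k : ℝ) : Tendsto (fun x => k * exp (c * x)) atBot (𝓝 0) := by
    simpa using (tendsto_exp_const_mul_atBot hc).const_mul k
  have := (((hexp (by positivity : 0 < 2 * η₁) (a₁ ^ 2 / (4 * η₁ ^ 2))).const_add 1).add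
    (hexp (by positivity : 0 < 2 * η₂) (a₂ ^ 2 / (4 * η₂ ^ 2)))).add
    (hexp (by positivity : 0 < 2 * η₁ + 2 * η₂)
      (a₁ ^ 2 * a₂ ^ 2 / (16 * η₁ ^ 2 * η₂ ^ 2) * ((η₁ - η₂) ^ 2 / (η₁ + η₂) ^ 2)))
  rw [add_zero, add_zero, add_zero] at this
  exact this

theorem tendsto_v1MLSqPrimitive_atBot {η₁ η₂ : ℝ} (h1 : 0 < η₁) (h2 : 0 < η₂) (a₁ a₂ : ℝ) :
    Tendsto (v1MLSqPrimitive η₁ η₂ a₁ a₂) atBot (𝓝 0) := by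
  have hg := ((tendsto_exp_const_mul_atBot (by positivity : 0 < 2 * η₂)).const_mul
    (a₂ ^ 2 / (4 * η₂ ^ 2))).const_add 1
  have := ((hg.div (tendsto_fML_atBot h1 h2 a₁ a₂) one_ne_zero).const_sub 1).const_mul (2 * η₁)
  rw [mul_zero, add_zero, div_one, sub_self, mul_zero] at this
  exact this

theorem tendsto_v1MLSqPrimitive_atTop {η₁ η₂ a₁ a₂ : ℝ} (h1 : 0 < η₁) (h2 : 0 < η₂)
    (hη : η₁ ≠ η₂) (ha₁ : a₁ ≠ 0) (ha₂ : a₂ ≠ 0) :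
    Tendsto (v1MLSqPrimitive η₁ η₂ a₁ a₂) atTop (𝓝 (2 * η₁)) := by
  set B := a₂ ^ 2 / (4 * η₂ ^ 2)
  set K := a₁ ^ 2 * a₂ ^ 2 / (16 * η₁ ^ 2 * η₂ ^ 2) * ((η₁ - η₂) ^ 2 / (η₁ + η₂) ^ 2)
  have hKpos : 0 < K := by
    have := sub_ne_zero.2 hη
    positivity
  have hbound : Tendsto (fun x => (exp (-(2 * η₁ + 2 * η₂) * x) + B * exp (-(2 * η₁) * x)) / K)
      atTop (𝓝 0) := by
    simpa using ((tendsto_exp_neg_const_mul_atTop (by positivity : 0 < 2 * η₁ + 2 * η₂)).add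
      ((tendsto_exp_neg_const_mul_atTop (by positivity : 0 < 2 * η₁)).const_mul B)).div_const K
  -- `fML` dominates its leading term `K * exp ((2 * η₁ + 2 * η₂) * x)`
  have hle (x : ℝ) : (1 + B * exp (2 * η₂ * x)) / fML η₁ η₂ a₁ a₂ x
      ≤ (exp (-(2 * η₁ + 2 * η₂) * x) + B * exp (-(2 * η₁) * x)) / K := by
    have hnum : 1 + B * exp (2 * η₂ * x) = (exp (-(2 * η₁ + 2 * η₂) * x)
        + B * exp (-(2 * η₁) * x)) * exp ((2 * η₁ + 2 * η₂) * x) := by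
      rw [add_mul, ← exp_add, mul_assoc B, ← exp_add, show -(2 * η₁ + 2 * η₂) * x
        + (2 * η₁ + 2 * η₂) * x = 0 by ring, show -(2 * η₁) * x + (2 * η₁ + 2 * η₂) * x
        = 2 * η₂ * x by ring, exp_zero]
    calc (1 + B * exp (2 * η₂ * x)) / fML η₁ η₂ a₁ a₂ x
        ≤ (1 + B * exp (2 * η₂ * x)) / (K * exp ((2 * η₁ + 2 * η₂) * x)) := by
          refine div_le_div_of_nonneg_left (by positivity) (by positivity) ?_
          exact le_add_of_nonneg_left (by positivity)
      _ = _ := by rw [hnum, mul_div_mul_right _ _ (exp_pos _).ne']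
  have hratio : Tendsto (fun x => (1 + B * exp (2 * η₂ * x)) / fML η₁ η₂ a₁ a₂ x) atTop (𝓝 0) :=
    tendsto_of_tendsto_of_tendsto_of_le_of_le tendsto_const_nhds hbound
      (fun x => (div_pos (by positivity) (fML_pos η₁ η₂ a₁ a₂ x)).le) hle
  have := (hratio.const_sub 1).const_mul (2 * η₁)
  rw [sub_zero, mul_one] at this
  exact this

theorem integral_v1ML_sq {η₁ η₂ a₁ a₂ : ℝ} (h1 : 0 < η₁) (h2 : 0 < η₂)
    (hη : η₁ ≠ η₂) (ha₁ : a₁ ≠ 0) (ha₂ : a₂ ≠ 0) :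
    ∫ x, v1ML η₁ η₂ a₁ a₂ x ^ 2 = 2 * η₁ := by
  simpa using integral_eq_sub_of_hasDerivAt_of_nonneg (hasDerivAt_v1MLSqPrimitive h1 h2 a₁ a₂)
    (fun x => sq_nonneg _) (tendsto_v1MLSqPrimitive_atBot h1 h2 a₁ a₂)
    (tendsto_v1MLSqPrimitive_atTop h1 h2 hη ha₁ ha₂)

/-- Normalisation of the explicit Manakov solutions: ∫ v₁² = 2η₁ and ∫ v₂² = 2η₂. -/
theorem ODE_normalisation (η₁ η₂ a₁ a₂ : ℝ) (h21 : η₂ < η₁) (h2 : 0 < η₂)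
    (ha₁ : a₁ ≠ 0) (ha₂ : a₂ ≠ 0) :
    (∫ x : ℝ, (v1ML η₁ η₂ a₁ a₂ x) ^ 2) = 2 * η₁ ∧
    (∫ x : ℝ, (v2ML η₁ η₂ a₁ a₂ x) ^ 2) = 2 * η₂ := by
  have h1 : 0 < η₁ := h2.trans h21
  refine ⟨integral_v1ML_sq h1 h2 h21.ne' ha₁ ha₂, ?_⟩
  rw [v2ML_eq_v1ML_swap]
  exact integral_v1ML_sq h2 h1 h21.ne ha₂ ha₁

end
end

section
/- Let μ₁, μ₂ < 0 and let v₁, v₂ : ℝ → ℝ be twice continuously differentiable solutions of the system v₁'' + 2(v₁²+v₂²)v₁ + μ₁v₁ = 0, v₂'' + 2(v₁²+v₂²)v₂ + μ₂v₂ = 0, such that v_j(x) → 0 and v_j'(x) → 0 as |x| → ∞ for j = 1, 2. Then the following two identities hold for every x ∈ ℝ: (i) (v₁²+v₂²)² + (v₁')² + (v₂')² + μ₁v₁² + μ₂v₂² = 0; (ii) (v₁²+v₂²)(μ₁v₂² + μ₂v₁² + μ₁μ₂) + (v₁v₂' − v₁'v₂)² + μ₂(v₁')² + μ₁(v₂')²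 = 0. -/
/-!
Both quantities are first integrals of the system: along any solution their derivative is a
polynomial combination of the two equations, hence vanishes identically. A function on `ℝ` with
zero derivative is constant, and since both quantities are continuous in `(v, v')` and vanish at
the origin, the decay at infinity forces that constant to be `0`.
-/

open MeasureTheory Real Filter

noncomputable section

theorem eq_of_hasDerivAt_zero_of_tendsto_cocompact {E : Type*} [NormedAddCommGroup E]
    [NormedSpace ℝ E] {f : ℝ → E} {a : E} (hf : ∀ x, HasDerivAt f 0 x)
    (ha : Tendsto f (cocompact ℝ) (nhds a)) (x : ℝ) : f x = a := by
  have hconst : f = fun _ => f x :=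
    funext fun y => is_const_of_deriv_eq_zero (fun t => (hf t).differentiableAt)
      (fun t => (hf t).deriv) y x
  rw [hconst] at ha
  exact tendsto_nhds_unique tendsto_const_nhds ha

theorem ContDiff.hasDerivAt_deriv {E : Type*} [NormedAddCommGroup E] [NormedSpace ℝ E]
    {f : ℝ → E} (hf : ContDiff ℝ 2 f) (x : ℝ) : HasDerivAt (deriv f) (deriv (deriv f) x) x :=
  ((contDiff_succ_iff_deriv (n := 1)).mp hf).2.2.differentiable one_ne_zero x |>.hasDerivAt

def manakovEnergy (μ₁ μ₂ a b p q : ℝ) : ℝ :=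
  (a ^ 2 + b ^ 2) ^ 2 + p ^ 2 + q ^ 2 + μ₁ * a ^ 2 + μ₂ * b ^ 2

def manakovSecondIntegral (μ₁ μ₂ a b p q : ℝ) : ℝ :=
  (a ^ 2 + b ^ 2) * (μ₁ * b ^ 2 + μ₂ * a ^ 2 + μ₁ * μ₂) + (a * q - p * b) ^ 2
    + μ₂ * p ^ 2 + μ₁ * q ^ 2

section FirstIntegrals

variable {μ₁ μ₂ : ℝ}

section Conservation

variable {v₁ v₂ w₁ w₂ : ℝ → ℝ} (hv₁ : ∀ x, HasDerivAt v₁ (w₁ x) x) (hv₂ : ∀ x, HasDerivAt v₂ (w₂ x) x)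
  (hw₁ : ∀ x, HasDerivAt w₁ (-(2 * (v₁ x ^ 2 + v₂ x ^ 2) * v₁ x + μ₁ * v₁ x)) x)
  (hw₂ : ∀ x, HasDerivAt w₂ (-(2 * (v₁ x ^ 2 + v₂ x ^ 2) * v₂ x + μ₂ * v₂ x)) x)
include hv₁ hv₂ hw₁ hw₂

theorem hasDerivAt_manakovEnergy (x : ℝ) :
    HasDerivAt (fun x => manakovEnergy μ₁ μ₂ (v₁ x) (v₂ x) (w₁ x) (w₂ x)) 0 x := by
  have H := (((((((hv₁ x).pow 2).add ((hv₂ x).pow 2)).pow 2).add ((hw₁ x).pow 2)).add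
    ((hw₂ x).pow 2)).add (((hv₁ x).pow 2).const_mul μ₁)).add (((hv₂ x).pow 2).const_mul μ₂)
  refine H.congr_deriv ?_
  simp only [Pi.add_apply, Pi.pow_apply]
  ring

theorem hasDerivAt_manakovSecondIntegral (x : ℝ) :
    HasDerivAt (fun x => manakovSecondIntegral μ₁ μ₂ (v₁ x) (v₂ x) (w₁ x) (w₂ x)) 0 x := by
  have H := ((((((hv₁ x).pow 2).add ((hv₂ x).pow 2)).mul
    (((((hv₂ x).pow 2).const_mul μ₁).add (((hv₁ x).pow 2).const_mul μ₂)).add_const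
      (μ₁ * μ₂))).add ((((hv₁ x).mul (hw₂ x)).sub ((hw₁ x).mul (hv₂ x))).pow 2)).add
    (((hw₁ x).pow 2).const_mul μ₂)).add (((hw₂ x).pow 2).const_mul μ₁)
  refine H.congr_deriv ?_
  simp only [Pi.add_apply, Pi.mul_apply, Pi.sub_apply, Pi.pow_apply]
  ring

end Conservation

section Decay

variable {α : Type*} {l : Filter α} {v₁ v₂ w₁ w₂ : α → ℝ} (hv₁ : Tendsto v₁ l (nhds 0))
  (hv₂ : Tendsto v₂ l (nhds 0)) (hw₁ : Tendsto w₁ l (nhds 0)) (hw₂ : Tendsto w₂ l (nhds 0))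
include hv₁ hv₂ hw₁ hw₂

theorem tendsto_manakovEnergy :
    Tendsto (fun x => manakovEnergy μ₁ μ₂ (v₁ x) (v₂ x) (w₁ x) (w₂ x)) l (nhds 0) := by
  simpa [manakovEnergy] using (((((((hv₁.pow 2).add (hv₂.pow 2)).pow 2).add (hw₁.pow 2)).add
    (hw₂.pow 2)).add ((hv₁.pow 2).const_mul μ₁)).add ((hv₂.pow 2).const_mul μ₂))

theorem tendsto_manakovSecondIntegral :
    Tendsto (fun x => manakovSecondIntegral μ₁ μ₂ (v₁ x) (v₂ x) (w₁ x) (w₂ x)) l (nhds 0) := by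
  simpa [manakovSecondIntegral] using ((((((hv₁.pow 2).add (hv₂.pow 2)).mul
    ((((hv₂.pow 2).const_mul μ₁).add ((hv₁.pow 2).const_mul μ₂)).add_const (μ₁ * μ₂))).add
    (((hv₁.mul hw₂).sub (hw₁.mul hv₂)).pow 2)).add ((hw₁.pow 2).const_mul μ₂)).add
    ((hw₂.pow 2).const_mul μ₁))

end Decay

end FirstIntegrals

theorem constants_of_motion_general (μ₁ μ₂ : ℝ)
    (v₁ v₂ : ℝ → ℝ) (hC1 : ContDiff ℝ 2 v₁) (hC2 : ContDiff ℝ 2 v₂)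
    (heq1 : ∀ x, deriv (deriv v₁) x + 2 * ((v₁ x) ^ 2 + (v₂ x) ^ 2) * v₁ x + μ₁ * v₁ x = 0)
    (heq2 : ∀ x, deriv (deriv v₂) x + 2 * ((v₁ x) ^ 2 + (v₂ x) ^ 2) * v₂ x + μ₂ * v₂ x = 0)
    (hd1 : Tendsto v₁ (cocompact ℝ) (nhds 0))
    (hd2 : Tendsto v₂ (cocompact ℝ) (nhds 0))
    (hd1' : Tendsto (deriv v₁) (cocompact ℝ) (nhds 0))
    (hd2' : Tendsto (deriv v₂) (cocompact ℝ) (nhds 0)) :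
    ∀ x : ℝ,
      ((v₁ x) ^ 2 + (v₂ x) ^ 2) ^ 2 + (deriv v₁ x) ^ 2 + (deriv v₂ x) ^ 2
          + μ₁ * (v₁ x) ^ 2 + μ₂ * (v₂ x) ^ 2 = 0 ∧
      ((v₁ x) ^ 2 + (v₂ x) ^ 2) * (μ₁ * (v₂ x) ^ 2 + μ₂ * (v₁ x) ^ 2 + μ₁ * μ₂)
          + (v₁ x * deriv v₂ x - deriv v₁ x * v₂ x) ^ 2
          + μ₂ * (deriv v₁ x) ^ 2 + μ₁ * (deriv v₂ x) ^ 2 = 0 := by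
  have hv₁ x : HasDerivAt v₁ (deriv v₁ x) x := (hC1.differentiable two_ne_zero x).hasDerivAt
  have hv₂ x : HasDerivAt v₂ (deriv v₂ x) x := (hC2.differentiable two_ne_zero x).hasDerivAt
  have hw₁ x := (hC1.hasDerivAt_deriv x).congr_deriv (eq_neg_of_add_eq_zero_left
    ((add_assoc _ _ _).symm.trans (heq1 x)))
  have hw₂ x := (hC2.hasDerivAt_deriv x).congr_deriv (eq_neg_of_add_eq_zero_left
    ((add_assoc _ _ _).symm.trans (heq2 x)))
  intro x
  exact ⟨eq_of_hasDerivAt_zero_of_tendsto_cocompact (hasDerivAt_manakovEnergy hv₁ hv₂ hw₁ hw₂)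
      (tendsto_manakovEnergy hd1 hd2 hd1' hd2') x,
    eq_of_hasDerivAt_zero_of_tendsto_cocompact (hasDerivAt_manakovSecondIntegral hv₁ hv₂ hw₁ hw₂)
      (tendsto_manakovSecondIntegral hd1 hd2 hd1' hd2') x⟩

/-- The two constants of motion of the integrable coupled NLS system, for decaying
solutions. -/
theorem constants_of_motion (μ₁ μ₂ : ℝ) (h1 : μ₁ < 0) (h2 : μ₂ < 0)
    (v₁ v₂ : ℝ → ℝ) (hC1 : ContDiff ℝ 2 v₁) (hC2 : ContDiff ℝ 2 v₂)
    (heq1 : ∀ x, deriv (deriv v₁) x + 2 * ((v₁ x) ^ 2 + (v₂ x) ^ 2) * v₁ x + μ₁ * v₁ x = 0)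
    (heq2 : ∀ x, deriv (deriv v₂) x + 2 * ((v₁ x) ^ 2 + (v₂ x) ^ 2) * v₂ x + μ₂ * v₂ x = 0)
    (hd1 : Tendsto v₁ (cocompact ℝ) (nhds 0))
    (hd2 : Tendsto v₂ (cocompact ℝ) (nhds 0))
    (hd1' : Tendsto (deriv v₁) (cocompact ℝ) (nhds 0))
    (hd2' : Tendsto (deriv v₂) (cocompact ℝ) (nhds 0)) :
    ∀ x : ℝ,
      ((v₁ x) ^ 2 + (v₂ x) ^ 2) ^ 2 + (deriv v₁ x) ^ 2 + (deriv v₂ x) ^ 2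
          + μ₁ * (v₁ x) ^ 2 + μ₂ * (v₂ x) ^ 2 = 0 ∧
      ((v₁ x) ^ 2 + (v₂ x) ^ 2) * (μ₁ * (v₂ x) ^ 2 + μ₂ * (v₁ x) ^ 2 + μ₁ * μ₂)
          + (v₁ x * deriv v₂ x - deriv v₁ x * v₂ x) ^ 2
          + μ₂ * (deriv v₁ x) ^ 2 + μ₁ * (deriv v₂ x) ^ 2 = 0 :=
  constants_of_motion_general μ₁ μ₂ v₁ v₂ hC1 hC2 heq1 heq2 hd1 hd2 hd1' hd2'

end
end

section
/- Let X be a measure space and p > r ≥ 0. Then for any measurable function f on X, ((p−r)^{p−r} · r^r / p^p)^{1/p} · [f]'_{p,0} ≤ [f]'_{p,r} ≤ (Γ(p−r)Γ(r+1)/Γ(p))^{1/p} · [f]'_{p,0}, with the convention 0⁰ = 1. -/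
/-!
Lower bound: on `{|f| > σ}` one has `(|f| - τ)₊ ≥ σ - τ`, so
`τ^(p-r) ∫ (|f| - τ)₊^r ≥ τ^(p-r) (σ - τ)^r |{|f| > σ}|`, and `τ^(p-r) (σ - τ)^r` reaches
`(p-r)^(p-r) r^r / p^p · σ^p`. Upper bound: by the layer-cake formula and the weak-type estimate
`|{|f| > s}| ≤ [f]'_{p,0}^p s^(-p)`,
`∫ (|f| - τ)₊^r = r ∫₀^∞ t^(r-1) |{|f| > τ + t}| dt ≤ r [f]'_{p,0}^p ∫₀^∞ t^(r-1) (τ + t)^(-p) dt`,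
and the last integral is the Beta integral `τ^(r-p) Γ(r) Γ(p-r) / Γ(p)`. Both bounds are linear
in the `p`-th powers of the quasinorms.
-/

open MeasureTheory Real
open scoped ENNReal

noncomputable section

/-- The quantity [f]'_{p,r} = sup_{τ>0} τ^{1−r/p} (∫ (|f|−τ)₊^r)^{1/p}, with the
convention (|f|−τ)₊⁰ = 1_{{|f|>τ}}, so that [f]'_{p,0} is the usual weak-L^p
quasinorm. -/
def weakq {α : Type*} [MeasurableSpace α] (μ : Measure α) (p r : ℝ) (f : α → ℝ) : ℝ≥0∞ :=
  ⨆ τ : {t : ℝ // 0 < t},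
    ENNReal.ofReal ((τ : ℝ) ^ (1 - r / p)) *
      (∫⁻ x, (if r = 0 then Set.indicator {y | (τ : ℝ) < |f y|} (fun _ => (1 : ℝ≥0∞)) x
              else ENNReal.ofReal (max (|f x| - (τ : ℝ)) 0 ^ r)) ∂μ) ^ (1 / p)

open Set

theorem ENNReal.iSup_rpow {ι : Sort*} (g : ι → ℝ≥0∞) {y : ℝ} (hy : 0 < y) :
    (⨆ i, g i) ^ y = ⨆ i, g i ^ y :=
  (ENNReal.orderIsoRpow y hy).map_iSup g

theorem ENNReal.ofReal_rpow_one_sub_div_mul_rpow {p r τ : ℝ} (hp : 0 < p) (hτ : 0 ≤ τ)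
    (I : ℝ≥0∞) :
    ENNReal.ofReal (τ ^ (1 - r / p)) * I ^ (1 / p)
      = (ENNReal.ofReal (τ ^ (p - r)) * I) ^ (1 / p) := by
  rw [ENNReal.mul_rpow_of_nonneg _ _ (by positivity),
    ENNReal.ofReal_rpow_of_nonneg (by positivity) (by positivity), ← Real.rpow_mul hτ]
  congr 3
  field_simp

theorem lintegral_ofReal_mul_const {β : Type*} [MeasurableSpace β] {ν : Measure β} (g : β → ℝ)
    {c : ℝ} (hc : 0 ≤ c) :
    ∫⁻ x, ENNReal.ofReal (g x * c) ∂ν = (∫⁻ x, ENNReal.ofReal (g x) ∂ν) * ENNReal.ofReal c := by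
  simp_rw [ENNReal.ofReal_mul' hc]
  exact lintegral_mul_const' _ _ ENNReal.ofReal_ne_top

theorem lintegral_rpow_mul_exp_neg_mul_Ioi {a b : ℝ} (ha : 0 < a) (hb : 0 < b) :
    ∫⁻ t in Ioi (0 : ℝ), ENNReal.ofReal (t ^ (a - 1) * exp (-(b * t)))
      = ENNReal.ofReal ((1 / b) ^ a * Gamma a) := by
  rw [← ofReal_integral_eq_lintegral_ofReal, integral_rpow_mul_exp_neg_mul_Ioi ha hb]
  · refine (integrableOn_rpow_mul_exp_neg_mul_rpow (s := a - 1) (by linarith) one_pos hb).congr_fun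
      (fun t _ => ?_) measurableSet_Ioi
    simp only [rpow_one, neg_mul]
  · filter_upwards [self_mem_ae_restrict measurableSet_Ioi] with t ht
    exact mul_nonneg (rpow_nonneg (le_of_lt ht) _) (exp_pos _).le

theorem lintegral_add_rpow_neg_mul_rpow_Ioi {p r τ : ℝ} (hr : 0 < r) (hpr : r < p) (hτ : 0 < τ) :
    ∫⁻ t in Ioi (0 : ℝ), ENNReal.ofReal ((τ + t) ^ (-p) * t ^ (r - 1))
      = ENNReal.ofReal (τ ^ (r - p) * (Gamma r * Gamma (p - r) / Gamma p)) := by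
  have hp : 0 < p := hr.trans hpr
  -- `(τ + t)^(-p) = Γ(p)⁻¹ ∫ s^(p-1) e^(-(τ+t)s) ds`; after swapping the integrals the inner one
  -- is again a Gamma integral, in `t`.
  have gamma_in_s : ∀ t ∈ Ioi (0 : ℝ), ENNReal.ofReal ((τ + t) ^ (-p) * t ^ (r - 1))
      = ∫⁻ s in Ioi (0 : ℝ),
          ENNReal.ofReal (s ^ (p - 1) * exp (-((τ + t) * s)) * (t ^ (r - 1) / Gamma p)) := by
    intro t (ht : 0 < t)
    rw [lintegral_ofReal_mul_const _ (by positivity),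
      lintegral_rpow_mul_exp_neg_mul_Ioi hp (by linarith), ← ENNReal.ofReal_mul (by positivity),
      one_div, inv_rpow (by linarith), ← rpow_neg (by linarith)]
    field_simp
  have gamma_in_t : ∀ s ∈ Ioi (0 : ℝ), ∫⁻ t in Ioi (0 : ℝ),
        ENNReal.ofReal (s ^ (p - 1) * exp (-((τ + t) * s)) * (t ^ (r - 1) / Gamma p))
      = ENNReal.ofReal (s ^ ((p - r) - 1) * exp (-(τ * s)) * (Gamma r / Gamma p)) := by
    intro s (hs : 0 < s)
    have split : ∀ t, s ^ (p - 1) * exp (-((τ + t) * s)) * (t ^ (r - 1) / Gamma p)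
        = t ^ (r - 1) * exp (-(s * t)) * (s ^ (p - 1) * exp (-(τ * s)) / Gamma p) := fun t => by
      rw [show -((τ + t) * s) = -(τ * s) + -(s * t) by ring, exp_add]
      ring
    simp_rw [split]
    rw [lintegral_ofReal_mul_const _ (by positivity), lintegral_rpow_mul_exp_neg_mul_Ioi hr hs,
      ← ENNReal.ofReal_mul (by positivity), one_div, inv_rpow hs.le, ← rpow_neg hs.le,
      show p - r - 1 = -r + (p - 1) by ring, rpow_add hs]
    field_simp
  rw [setLIntegral_congr_fun measurableSet_Ioi gamma_in_s, lintegral_lintegral_swap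
      (Measurable.aemeasurable (by fun_prop)),
    setLIntegral_congr_fun measurableSet_Ioi gamma_in_t,
    lintegral_ofReal_mul_const (fun s => s ^ ((p - r) - 1) * exp (-(τ * s))) (by positivity),
    lintegral_rpow_mul_exp_neg_mul_Ioi (by linarith) hτ, ← ENNReal.ofReal_mul (by positivity),
    one_div, inv_rpow hτ.le, ← rpow_neg hτ.le, neg_sub]
  ring_nf

theorem optimal_constant_mul_rpow {p r σ : ℝ} (hr : 0 ≤ r) (hpr : r < p) (hσ : 0 ≤ σ) :
    (p - r) ^ (p - r) * r ^ r / p ^ p * σ ^ p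
      = ((p - r) / p * σ) ^ (p - r) * (σ - (p - r) / p * σ) ^ r := by
  have hp : 0 < p := hr.trans_lt hpr
  have hpr' : 0 ≤ p - r := by linarith
  rw [show σ - (p - r) / p * σ = r / p * σ by field_simp; ring,
    mul_rpow (by positivity) hσ, mul_rpow (by positivity) hσ, div_rpow hpr' hp.le,
    div_rpow hr hp.le]
  have split : ∀ {x : ℝ}, 0 ≤ x → x ^ p = x ^ (p - r) * x ^ r := fun hx => by
    rw [← rpow_add' hx (by linarith), sub_add_cancel]
  rw [split hp.le, split hσ]
  field_simp

section

variable {α : Type*} [MeasurableSpace α] {μ : Measure α} {p r : ℝ} {f : α → ℝ}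

def weakqPowZero (μ : Measure α) (p : ℝ) (f : α → ℝ) : ℝ≥0∞ :=
  ⨆ τ : {t : ℝ // 0 < t}, ENNReal.ofReal ((τ : ℝ) ^ p) * μ {x | (τ : ℝ) < |f x|}

def weakqPow (μ : Measure α) (p r : ℝ) (f : α → ℝ) : ℝ≥0∞ :=
  ⨆ τ : {t : ℝ // 0 < t}, ENNReal.ofReal ((τ : ℝ) ^ (p - r)) *
    ∫⁻ x, ENNReal.ofReal (max (|f x| - τ) 0 ^ r) ∂μ

theorem weakq_zero_eq (hp : 0 < p) (hf : AEMeasurable f μ) :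
    weakq μ p 0 f = weakqPowZero μ p f ^ (1 / p) := by
  rw [weakqPowZero, ENNReal.iSup_rpow _ (one_div_pos.2 hp), weakq]
  refine iSup_congr fun τ => ?_
  simp only [↓reduceIte]
  rw [lintegral_indicator₀ (nullMeasurableSet_lt aemeasurable_const hf.abs),
    setLIntegral_one, ENNReal.ofReal_rpow_one_sub_div_mul_rpow hp τ.2.le, sub_zero]

theorem weakq_eq (hp : 0 < p) (hr : r ≠ 0) :
    weakq μ p r f = weakqPow μ p r f ^ (1 / p) := by
  rw [weakqPow, ENNReal.iSup_rpow _ (one_div_pos.2 hp), weakq]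
  refine iSup_congr fun τ => ?_
  simp only [if_neg hr]
  rw [ENNReal.ofReal_rpow_one_sub_div_mul_rpow hp τ.2.le]

theorem ofReal_rpow_mul_meas_lt_abs_le_lintegral (hf : AEMeasurable f μ) (hr : 0 ≤ r)
    {σ τ : ℝ} (hτσ : τ ≤ σ) :
    ENNReal.ofReal ((σ - τ) ^ r) * μ {x | σ < |f x|}
      ≤ ∫⁻ x, ENNReal.ofReal (max (|f x| - τ) 0 ^ r) ∂μ := by
  have hsub : {x | σ < |f x|} ⊆
      {x | ENNReal.ofReal ((σ - τ) ^ r) ≤ ENNReal.ofReal (max (|f x| - τ) 0 ^ r)} := by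
    intro x hx
    have hx : σ < |f x| := hx
    exact ENNReal.ofReal_le_ofReal <|
      rpow_le_rpow (by linarith) ((sub_le_sub_right hx.le τ).trans (le_max_left _ _)) hr
  refine (mul_le_mul_right (measure_mono hsub) _).trans (mul_meas_ge_le_lintegral₀ ?_ _)
  fun_prop

theorem lintegral_posPart_sub_rpow_eq (hf : AEMeasurable f μ) (hr : 0 < r) (τ : ℝ) :
    ∫⁻ x, ENNReal.ofReal (max (|f x| - τ) 0 ^ r) ∂μ
      = ENNReal.ofReal r * ∫⁻ t in Ioi 0, μ {x | τ + t < |f x|} * ENNReal.ofReal (t ^ (r - 1)) := by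
  rw [lintegral_rpow_eq_lintegral_meas_lt_mul μ (f := fun x => max (|f x| - τ) 0)
    (ae_of_all _ fun x => le_max_right _ _) (by fun_prop) hr]
  congr 1
  refine setLIntegral_congr_fun measurableSet_Ioi fun t (ht : 0 < t) => ?_
  congr 3
  ext x
  simp only [lt_max_iff]
  constructor
  · rintro (h | h) <;> linarith
  · intro h; left; linarith

theorem meas_lt_abs_le_mul_rpow_neg {W : ℝ≥0∞} {t : ℝ} (ht : 0 < t)
    (hW : ENNReal.ofReal (t ^ p) * μ {x | t < |f x|} ≤ W) :
    μ {x | t < |f x|} ≤ W * ENNReal.ofReal (t ^ (-p)) := by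
  calc μ {x | t < |f x|}
      = ENNReal.ofReal (t ^ p) * μ {x | t < |f x|} * ENNReal.ofReal (t ^ (-p)) := by
        rw [mul_comm, ← mul_assoc, ← ENNReal.ofReal_mul (by positivity), ← rpow_add ht,
          neg_add_cancel, rpow_zero, ENNReal.ofReal_one, one_mul]
    _ ≤ W * ENNReal.ofReal (t ^ (-p)) := by gcongr

theorem ofReal_mul_weakqPowZero_le_weakqPow (hf : AEMeasurable f μ) (hr : 0 ≤ r) (hpr : r < p) :
    ENNReal.ofReal ((p - r) ^ (p - r) * r ^ r / p ^ p) * weakqPowZero μ p f ≤ weakqPow μ p r f := by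
  have hp : 0 < p := hr.trans_lt hpr
  rw [weakqPowZero, ENNReal.mul_iSup]
  refine iSup_le fun ⟨σ, hσ⟩ => ?_
  -- `τ ↦ τ^(p-r) (σ-τ)^r` is maximal at `τ = (p-r)σ/p`
  set τ := (p - r) / p * σ
  have hτ : 0 < τ := mul_pos (div_pos (by linarith) hp) hσ
  have hτσ : τ ≤ σ := mul_le_of_le_one_left hσ.le ((div_le_one hp).2 (by linarith))
  refine le_iSup_of_le ⟨τ, hτ⟩ ?_
  calc ENNReal.ofReal ((p - r) ^ (p - r) * r ^ r / p ^ p)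
        * (ENNReal.ofReal (σ ^ p) * μ {x | σ < |f x|})
      = ENNReal.ofReal (τ ^ (p - r)) * (ENNReal.ofReal ((σ - τ) ^ r) * μ {x | σ < |f x|}) := by
        rw [← mul_assoc, ← ENNReal.ofReal_mul (by positivity),
          optimal_constant_mul_rpow hr hpr hσ.le, ENNReal.ofReal_mul (by positivity), mul_assoc]
    _ ≤ _ := by gcongr; exact ofReal_rpow_mul_meas_lt_abs_le_lintegral hf hr hτσ

theorem weakqPow_le_ofReal_mul_weakqPowZero (hf : AEMeasurable f μ) (hr : 0 < r) (hpr : r < p) :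
    weakqPow μ p r f
      ≤ ENNReal.ofReal (Gamma (p - r) * Gamma (r + 1) / Gamma p) * weakqPowZero μ p f := by
  refine iSup_le fun ⟨τ, hτ⟩ => ?_
  set W := weakqPowZero μ p f
  have tail : ∀ t ∈ Ioi (0 : ℝ), μ {x | τ + t < |f x|} * ENNReal.ofReal (t ^ (r - 1))
      ≤ W * ENNReal.ofReal ((τ + t) ^ (-p) * t ^ (r - 1)) := fun t (ht : 0 < t) => by
    have hτt : 0 < τ + t := by linarith
    rw [ENNReal.ofReal_mul (rpow_nonneg hτt.le _), ← mul_assoc]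
    gcongr
    exact meas_lt_abs_le_mul_rpow_neg hτt (le_iSup_of_le ⟨τ + t, hτt⟩ le_rfl)
  have constant : τ ^ (p - r) * (r * (τ ^ (r - p) * (Gamma r * Gamma (p - r) / Gamma p)))
      = Gamma (p - r) * Gamma (r + 1) / Gamma p := by
    have cancel : τ ^ (p - r) * τ ^ (r - p) = 1 := by
      rw [← rpow_add hτ, show p - r + (r - p) = 0 by ring, rpow_zero]
    rw [Gamma_add_one hr.ne']
    linear_combination (r * (Gamma r * Gamma (p - r) / Gamma p)) * cancel
  calc ENNReal.ofReal (τ ^ (p - r)) * ∫⁻ x, ENNReal.ofReal (max (|f x| - τ) 0 ^ r) ∂μ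
      ≤ ENNReal.ofReal (τ ^ (p - r)) *
          (ENNReal.ofReal r *
            ∫⁻ t in Ioi 0, W * ENNReal.ofReal ((τ + t) ^ (-p) * t ^ (r - 1))) := by
        rw [lintegral_posPart_sub_rpow_eq hf hr]
        gcongr _ * (_ * ?_)
        exact setLIntegral_mono (by fun_prop) tail
    _ = ENNReal.ofReal (Gamma (p - r) * Gamma (r + 1) / Gamma p) * W := by
        rw [lintegral_const_mul _ (by fun_prop), lintegral_add_rpow_neg_mul_rpow_Ioi hr hpr hτ,
          ← constant, ENNReal.ofReal_mul (rpow_nonneg hτ.le (p - r)), ENNReal.ofReal_mul hr.le,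
          ENNReal.ofReal_mul (rpow_nonneg hτ.le (r - p))]
        ring

end

/-- The quasinorms [·]'_{p,r} for 0 ≤ r < p are all equivalent to the weak-L^p
quasinorm [·]'_{p,0}, with explicit constants. -/
theorem weakq_equiv {α : Type*} [MeasurableSpace α] (μ : Measure α) (p r : ℝ)
    (hr : 0 ≤ r) (hpr : r < p) (f : α → ℝ) (hf : Measurable f) :
    ENNReal.ofReal (((p - r) ^ (p - r) * r ^ r / p ^ p) ^ (1 / p)) * weakq μ p 0 f
        ≤ weakq μ p r f ∧
      weakq μ p r f
        ≤ ENNReal.ofReal ((Real.Gamma (p - r) * Real.Gamma (r + 1) / Real.Gamma p) ^ (1 / p))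
            * weakq μ p 0 f := by
  have hp : 0 < p := hr.trans_lt hpr
  rcases hr.eq_or_lt with rfl | hr
  · simp [(rpow_pos_of_pos hp p).ne', (Gamma_pos_of_pos hp).ne']
  have hΓ : 0 < Gamma (p - r) * Gamma (r + 1) / Gamma p := by
    have := sub_pos.2 hpr
    positivity
  rw [weakq_zero_eq hp hf.aemeasurable, weakq_eq hp hr.ne',
    ← ENNReal.ofReal_rpow_of_nonneg (by positivity) (by positivity),
    ← ENNReal.ofReal_rpow_of_nonneg hΓ.le (by positivity),
    ← ENNReal.mul_rpow_of_nonneg _ _ (by positivity),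
    ← ENNReal.mul_rpow_of_nonneg _ _ (by positivity)]
  exact ⟨by gcongr; exact ofReal_mul_weakqPowZero_le_weakqPow hf.aemeasurable hr.le hpr,
    by gcongr; exact weakqPow_le_ofReal_mul_weakqPowZero hf.aemeasurable hr hpr⟩
end
end

section
/- Let X be a measure space, p > r ≥ 0, and f ∈ L^p(X). Then [f]'_{p,r} ≤ ((p−r)^{p−r} · r^r / p^p)^{1/p} · ‖f‖_{L^p(X)}, with the convention 0⁰ = 1. Moreover, the constant is best possible: if f is the indicator function of a measurable subset of X of finite positive measure, then equality holds. -/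
/-
For `t ≥ 0` and `τ > 0`, write `t = τ + (t - τ)` and apply weighted AM–GM with weights
`(p - r)/p` and `r/p` to `τ·p/(p - r)` and `(t - τ)·p/r`; raising to the power `p` gives the
pointwise bound `τ^(p-r) (t - τ)₊^r ≤ C t^p` with `C = (p - r)^(p - r) r^r / p^p`.
Integrating against `|f|` and taking `p`-th roots bounds each term of the supremum defining
`[f]'_{p,r}` by `C^(1/p) ‖f‖_p`. For `f = 1_s` the supremum factors as `μ(s)^(1/p)` times
`sup_τ τ^(1-r/p) (1 - τ)₊^(r/p)`, which is attained at `τ = (p - r)/p` with value `C^(1/p)`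
(for `r = 0` it equals `1`, approached as `τ → 1⁻`).
-/

open MeasureTheory Real
open scoped ENNReal

noncomputable section

def weakStrongConst (p r : ℝ) : ℝ := (p - r) ^ (p - r) * r ^ r / p ^ p

lemma weakStrongConst_nonneg {p r : ℝ} (hr : 0 ≤ r) (hpr : r ≤ p) :
    0 ≤ weakStrongConst p r := by
  unfold weakStrongConst
  have := Real.rpow_nonneg (sub_nonneg.2 hpr) (p - r)
  have := Real.rpow_nonneg hr r
  have := Real.rpow_nonneg (hr.trans hpr) p
  positivity

lemma weakStrongConst_zero_right {p : ℝ} (hp : 0 < p) : weakStrongConst p 0 = 1 := by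
  simp [weakStrongConst, (Real.rpow_pos_of_pos hp p).ne']

lemma weakStrongConst_eq {p r : ℝ} (hr : 0 < r) (hpr : r < p) :
    weakStrongConst p r = ((p - r) / p) ^ (p - r) * (r / p) ^ r := by
  have hp : 0 < p := hr.trans hpr
  rw [weakStrongConst, Real.div_rpow (sub_pos.2 hpr).le hp.le, Real.div_rpow hr.le hp.le,
    div_mul_div_comm, ← Real.rpow_add hp, sub_add_cancel]

lemma weakStrongConst_rpow_inv {p r : ℝ} (hr : 0 < r) (hpr : r < p) :
    weakStrongConst p r ^ (1 / p) = ((p - r) / p) ^ (1 - r / p) * (r / p) ^ (r / p) := by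
  have hp : 0 < p := hr.trans hpr
  have hu : 0 ≤ (p - r) / p := div_nonneg (sub_pos.2 hpr).le hp.le
  have hv : 0 ≤ r / p := div_nonneg hr.le hp.le
  rw [weakStrongConst_eq hr hpr, Real.mul_rpow (by positivity) (by positivity),
    ← Real.rpow_mul hu, ← Real.rpow_mul hv]
  congr 2 <;> field_simp

lemma rpow_mul_max_sub_rpow_le {p r τ t : ℝ} (hr : 0 < r) (hpr : r < p) (hτ : 0 < τ)
    (ht : 0 ≤ t) : τ ^ (p - r) * max (t - τ) 0 ^ r ≤ weakStrongConst p r * t ^ p := by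
  have hp : 0 < p := hr.trans hpr
  rcases le_or_gt t τ with htτ | htτ
  · rw [max_eq_right (sub_nonpos.2 htτ), Real.zero_rpow hr.ne', mul_zero]
    exact mul_nonneg (weakStrongConst_nonneg hr.le hpr.le) (by positivity)
  have hδ : 0 < t - τ := sub_pos.2 htτ
  set u := (p - r) / p with hu_def
  set v := r / p with hv_def
  have hu : 0 < u := div_pos (sub_pos.2 hpr) hp
  have hv : 0 < v := div_pos hr hp
  have hamgm : (τ / u) ^ u * ((t - τ) / v) ^ v ≤ t := by
    have := Real.geom_mean_le_arith_mean2_weighted hu.le hv.le (div_pos hτ hu).le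
      (div_pos hδ hv).le (by rw [hu_def, hv_def]; field_simp; ring)
    rwa [mul_div_cancel₀ _ hu.ne', mul_div_cancel₀ _ hv.ne', add_sub_cancel] at this
  have hpow := Real.rpow_le_rpow (by positivity) hamgm hp.le
  have hup : u * p = p - r := by rw [hu_def]; field_simp
  have hvp : v * p = r := by rw [hv_def]; field_simp
  rw [Real.mul_rpow (by positivity) (by positivity), ← Real.rpow_mul (by positivity),
    ← Real.rpow_mul (by positivity), hup, hvp, Real.div_rpow hτ.le hu.le,
    Real.div_rpow hδ.le hv.le, div_mul_div_comm, div_le_iff₀ (by positivity)] at hpow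
  rw [max_eq_left hδ.le, weakStrongConst_eq hr hpr]
  linarith

def truncatedRpow (r τ t : ℝ) : ℝ≥0∞ :=
  if r = 0 then (if τ < t then 1 else 0) else ENNReal.ofReal (max (t - τ) 0 ^ r)

lemma truncatedRpow_of_le {r τ t : ℝ} (h : t ≤ τ) : truncatedRpow r τ t = 0 := by
  unfold truncatedRpow
  split_ifs with hr hlt
  · exact absurd hlt h.not_gt
  · rfl
  · rw [max_eq_right (sub_nonpos.2 h), Real.zero_rpow hr, ENNReal.ofReal_zero]

lemma ofReal_rpow_mul_truncatedRpow_le {p r τ t : ℝ} (hr : 0 ≤ r) (hpr : r < p) (hτ : 0 < τ)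
    (ht : 0 ≤ t) : ENNReal.ofReal (τ ^ (p - r)) * truncatedRpow r τ t
      ≤ ENNReal.ofReal (weakStrongConst p r * t ^ p) := by
  rcases hr.eq_or_lt with rfl | hr
  · rw [weakStrongConst_zero_right hpr, one_mul, sub_zero, truncatedRpow, if_pos rfl]
    split_ifs with h
    · rw [mul_one]
      exact ENNReal.ofReal_le_ofReal (Real.rpow_le_rpow hτ.le h.le hpr.le)
    · simp
  · rw [truncatedRpow, if_neg hr.ne', ← ENNReal.ofReal_mul (by positivity)]
    exact ENNReal.ofReal_le_ofReal (rpow_mul_max_sub_rpow_le hr hpr hτ ht)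

lemma ofReal_weakStrongConst_rpow_le_iSup {p r : ℝ} (hr : 0 ≤ r) (hpr : r < p) :
    ENNReal.ofReal (weakStrongConst p r ^ (1 / p))
      ≤ ⨆ τ : {t : ℝ // 0 < t},
          ENNReal.ofReal ((τ : ℝ) ^ (1 - r / p)) * truncatedRpow r τ 1 ^ (1 / p) := by
  have hp : 0 < p := hr.trans_lt hpr
  rcases hr.eq_or_lt with rfl | hr
  · rw [weakStrongConst_zero_right hp, Real.one_rpow, ENNReal.ofReal_one]
    refine ENNReal.le_of_forall_lt_one_mul_le fun a ha => ?_
    have ha' : a.toReal < 1 := by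
      simpa using (ENNReal.toReal_lt_toReal ha.ne_top ENNReal.one_ne_top).2 ha
    have hτ : 0 < max a.toReal (1 / 2) := lt_max_of_lt_right (by norm_num)
    refine le_iSup_of_le ⟨max a.toReal (1 / 2), hτ⟩ ?_
    simp only [truncatedRpow, if_pos, max_lt ha' (by norm_num : (1 / 2 : ℝ) < 1)]
    rw [zero_div, sub_zero, Real.rpow_one, ENNReal.one_rpow, mul_one, mul_one]
    exact (ENNReal.le_ofReal_iff_toReal_le ha.ne_top hτ.le).2 (le_max_left _ _)
  · have hτ₀ : 0 < (p - r) / p := div_pos (sub_pos.2 hpr) hp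
    refine le_iSup_of_le ⟨(p - r) / p, hτ₀⟩ ?_
    have h1 : 1 - (p - r) / p = r / p := by field_simp; ring
    have hv : 0 ≤ r / p := div_nonneg hr.le hp.le
    dsimp only
    rw [truncatedRpow, if_neg hr.ne', h1, max_eq_left hv,
      ENNReal.ofReal_rpow_of_nonneg (by positivity) (by positivity), ← Real.rpow_mul hv,
      mul_one_div, ← ENNReal.ofReal_mul (by positivity), weakStrongConst_rpow_inv hr hpr]

section

variable {α : Type*} [MeasurableSpace α] (μ : Measure α)

lemma weakq_eq_iSup_truncatedRpow (p r : ℝ) (f : α → ℝ) :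
    weakq μ p r f = ⨆ τ : {t : ℝ // 0 < t},
      ENNReal.ofReal ((τ : ℝ) ^ (1 - r / p)) * (∫⁻ x, truncatedRpow r τ |f x| ∂μ) ^ (1 / p) := by
  unfold weakq truncatedRpow
  split_ifs <;> simp [Set.indicator_apply]

lemma weakq_le_eLpNorm {p r : ℝ} (hr : 0 ≤ r) (hpr : r < p) (f : α → ℝ) :
    weakq μ p r f
      ≤ ENNReal.ofReal (weakStrongConst p r ^ (1 / p)) * eLpNorm f (ENNReal.ofReal p) μ := by
  have hp : 0 < p := hr.trans_lt hpr
  have hC := weakStrongConst_nonneg hr hpr.le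
  rw [weakq_eq_iSup_truncatedRpow, eLpNorm_eq_lintegral_rpow_enorm_toReal (by simpa using hp)
    ENNReal.ofReal_ne_top, ENNReal.toReal_ofReal hp.le,
    ← ENNReal.ofReal_rpow_of_nonneg hC (by positivity),
    ← ENNReal.mul_rpow_of_nonneg _ _ (by positivity)]
  refine iSup_le fun ⟨τ, hτ⟩ => ?_
  have hτ_rpow : ENNReal.ofReal (τ ^ (1 - r / p)) = ENNReal.ofReal (τ ^ (p - r)) ^ (1 / p) := by
    rw [ENNReal.ofReal_rpow_of_nonneg (by positivity) (by positivity), ← Real.rpow_mul hτ.le]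
    congr 2
    field_simp
  rw [hτ_rpow, ← ENNReal.mul_rpow_of_nonneg _ _ (by positivity)]
  refine ENNReal.rpow_le_rpow ?_ (by positivity)
  rw [← lintegral_const_mul' _ _ ENNReal.ofReal_ne_top,
    ← lintegral_const_mul' _ _ ENNReal.ofReal_ne_top]
  refine lintegral_mono fun x => ?_
  rw [← ofReal_norm, Real.norm_eq_abs, ENNReal.ofReal_rpow_of_nonneg (abs_nonneg _) hp.le,
    ← ENNReal.ofReal_mul hC]
  exact ofReal_rpow_mul_truncatedRpow_le hr hpr hτ (abs_nonneg _)

lemma lintegral_truncatedRpow_indicator_one {r τ : ℝ} (hτ : 0 < τ) {s : Set α}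
    (hs : MeasurableSet s) :
    ∫⁻ x, truncatedRpow r τ |s.indicator (fun _ => (1 : ℝ)) x| ∂μ
      = truncatedRpow r τ 1 * μ s := by
  have hfun : (fun x => truncatedRpow r τ |s.indicator (fun _ => (1 : ℝ)) x|)
      = s.indicator fun _ => truncatedRpow r τ 1 := by
    funext x
    by_cases hx : x ∈ s <;> simp [hx, truncatedRpow_of_le hτ.le]
  rw [hfun, lintegral_indicator_const hs]

lemma weakq_indicator_one {p : ℝ} (hp : 0 < p) (r : ℝ) {s : Set α} (hs : MeasurableSet s) :
    weakq μ p r (s.indicator fun _ => (1 : ℝ))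
      = (⨆ τ : {t : ℝ // 0 < t},
          ENNReal.ofReal ((τ : ℝ) ^ (1 - r / p)) * truncatedRpow r τ 1 ^ (1 / p))
        * μ s ^ (1 / p) := by
  rw [weakq_eq_iSup_truncatedRpow, ENNReal.iSup_mul]
  refine iSup_congr fun ⟨τ, hτ⟩ => ?_
  rw [lintegral_truncatedRpow_indicator_one μ hτ hs,
    ENNReal.mul_rpow_of_nonneg _ _ (by positivity), mul_assoc]

end

theorem weakq_le_strong_general {α : Type*} [MeasurableSpace α] (μ : Measure α) (p r : ℝ)
    (hr : 0 ≤ r) (hpr : r < p) (f : α → ℝ) :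
    weakq μ p r f
        ≤ ENNReal.ofReal (((p - r) ^ (p - r) * r ^ r / p ^ p) ^ (1 / p))
            * eLpNorm f (ENNReal.ofReal p) μ ∧
      ∀ s : Set α, MeasurableSet s → 0 < μ s → μ s < ⊤ →
        weakq μ p r (s.indicator fun _ => (1 : ℝ))
          = ENNReal.ofReal (((p - r) ^ (p - r) * r ^ r / p ^ p) ^ (1 / p))
              * eLpNorm (s.indicator fun _ => (1 : ℝ)) (ENNReal.ofReal p) μ := by
  have hp : 0 < p := hr.trans_lt hpr
  refine ⟨weakq_le_eLpNorm μ hr hpr f, fun s hs _ _ => (weakq_le_eLpNorm μ hr hpr _).antisymm ?_⟩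
  rw [weakq_indicator_one μ hp r hs, eLpNorm_indicator_const hs (by simpa using hp)
    ENNReal.ofReal_ne_top, ENNReal.toReal_ofReal hp.le, enorm_one, one_mul]
  gcongr
  exact ofReal_weakStrongConst_rpow_le_iSup hr hpr

/-- Weak-strong comparison: [f]'_{p,r} ≤ ((p−r)^{p−r} r^r / p^p)^{1/p} ‖f‖_{L^p},
with equality for indicator functions of sets of finite positive measure. -/
theorem weakq_le_strong {α : Type*} [MeasurableSpace α] (μ : Measure α) (p r : ℝ)
    (hr : 0 ≤ r) (hpr : r < p) (f : α → ℝ) (hf : MemLp f (ENNReal.ofReal p) μ) :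
    weakq μ p r f
        ≤ ENNReal.ofReal (((p - r) ^ (p - r) * r ^ r / p ^ p) ^ (1 / p))
            * eLpNorm f (ENNReal.ofReal p) μ ∧
      ∀ s : Set α, MeasurableSet s → 0 < μ s → μ s < ⊤ →
        weakq μ p r (s.indicator fun _ => (1 : ℝ))
          = ENNReal.ofReal (((p - r) ^ (p - r) * r ^ r / p ^ p) ^ (1 / p))
              * eLpNorm (s.indicator fun _ => (1 : ℝ)) (ENNReal.ofReal p) μ :=
  weakq_le_strong_general μ p r hr hpr f

end
end
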